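/- For density matrices ρ and σ, the function ψ(s) = log Tr(ρ^s σ^{1-s}) is convex on the interval [0,1]. -/

import Mathlib

open Matrix
open scoped ComplexOrder

/-- Trace norm `‖X‖₁ = Tr √(XᴴX)`. -/
noncomputable def traceNorm {n : Type*} [Fintype n] [DecidableEq n] (X : Matrix n n ℂ) : ℝ :=
  (((Matrix.posSemidef_conjTranspose_mul_self X).1.cfc Real.sqrt).trace).re

/-- Fractional power `A^s` of a positive semidefinite matrix, defined spectrally with the
convention `0 ^ s = 0` for all real `s`. -/
noncomputable def Matrix.PosSemidef.rpow {n : Type*} [Fintype n] [DecidableEq n]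
    {A : Matrix n n ℂ} (hA : A.PosSemidef) (s : ℝ) : Matrix n n ℂ :=
  hA.1.cfc (fun x => if x = 0 then 0 else x ^ s)

/-- Matrix logarithm of a positive semidefinite matrix, defined spectrally with the
convention `log 0 = 0` on the kernel. -/
noncomputable def Matrix.PosSemidef.log {n : Type*} [Fintype n] [DecidableEq n]
    {A : Matrix n n ℂ} (hA : A.PosSemidef) : Matrix n n ℂ :=
  hA.1.cfc Real.log

/-!
In eigenbases `ρ = ∑ rᵢ |uᵢ⟩⟨uᵢ|`, `σ = ∑ tⱼ |vⱼ⟩⟨vⱼ|` one has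
`Tr(ρ^s σ^{1-s}) = ∑ᵢⱼ |⟨uᵢ|vⱼ⟩|² rᵢ^s tⱼ^{1-s}`, and each term with `rᵢ tⱼ ≠ 0` equals
`|⟨uᵢ|vⱼ⟩|² tⱼ exp(s (log rᵢ - log tⱼ))`. So `ψ` is the logarithm of a nonnegative combination of
exponentials of affine functions of `s`, which is convex by Hölder's inequality.
-/

open Real Finset

theorem Real.sum_rpow_mul_rpow_le {ι : Type*} (s : Finset ι) {f g : ι → ℝ} {a b : ℝ}
    (hf : ∀ i ∈ s, 0 ≤ f i) (hg : ∀ i ∈ s, 0 ≤ g i) (ha : 0 < a) (hb : 0 < b) (hab : a + b = 1) :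
    ∑ i ∈ s, f i ^ a * g i ^ b ≤ (∑ i ∈ s, f i) ^ a * (∑ i ∈ s, g i) ^ b := by
  have cancel : ∀ {c : ℝ} {x : ι → ℝ}, 0 < c → (∀ i ∈ s, 0 ≤ x i) →
      ∑ i ∈ s, (x i ^ c) ^ (1 / c) = ∑ i ∈ s, x i := fun hc hx =>
    sum_congr rfl fun i hi => by rw [← rpow_mul (hx i hi), mul_one_div_cancel hc.ne', rpow_one]
  simpa only [one_div_one_div, cancel ha hf, cancel hb hg] using
    inner_le_Lp_mul_Lq_of_nonneg s (holderConjugate_one_div ha hb hab)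
      (fun i hi => rpow_nonneg (hf i hi) a) (fun i hi => rpow_nonneg (hg i hi) b)

theorem Real.mul_exp_mul_add_eq_rpow_mul_rpow {w : ℝ} (hw : 0 ≤ w) (u x y : ℝ) {a b : ℝ}
    (hab : a + b = 1) :
    w * exp (u * (a * x + b * y)) = (w * exp (u * x)) ^ a * (w * exp (u * y)) ^ b := by
  rw [mul_rpow hw (exp_pos _).le, mul_rpow hw (exp_pos _).le, ← exp_mul, ← exp_mul,
    mul_mul_mul_comm, ← rpow_add' hw (by rw [hab]; exact one_ne_zero), hab, rpow_one,
    ← exp_add]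
  ring_nf

theorem convexOn_log_sum_mul_exp {ι : Type*} (s : Finset ι) {w : ι → ℝ} (u : ι → ℝ)
    (hw : ∀ i ∈ s, 0 ≤ w i) :
    ConvexOn ℝ Set.univ (fun x => log (∑ i ∈ s, w i * exp (u i * x))) := by
  by_cases hzero : ∀ i ∈ s, w i = 0
  · have hS : ∀ x, ∑ i ∈ s, w i * exp (u i * x) = 0 := fun x =>
      sum_eq_zero fun i hi => by rw [hzero i hi, zero_mul]
    simpa only [hS, log_zero] using convexOn_const (0 : ℝ) convex_univ
  push Not at hzero
  obtain ⟨i₀, hi₀, hwi₀⟩ := hzero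
  have hterm : ∀ x, ∀ i ∈ s, 0 ≤ w i * exp (u i * x) := fun x i hi =>
    mul_nonneg (hw i hi) (exp_pos _).le
  have hpos : ∀ x, 0 < ∑ i ∈ s, w i * exp (u i * x) := fun x =>
    sum_pos' (hterm x) ⟨i₀, hi₀, mul_pos ((hw i₀ hi₀).lt_of_ne' hwi₀) (exp_pos _)⟩
  refine convexOn_iff_forall_pos.2 ⟨convex_univ, fun x _ y _ a b ha hb hab => ?_⟩
  calc log (∑ i ∈ s, w i * exp (u i * (a • x + b • y)))
      ≤ log ((∑ i ∈ s, w i * exp (u i * x)) ^ a * (∑ i ∈ s, w i * exp (u i * y)) ^ b) := by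
        refine log_le_log (hpos _) ?_
        rw [smul_eq_mul, smul_eq_mul,
          sum_congr rfl fun i hi => mul_exp_mul_add_eq_rpow_mul_rpow (hw i hi) (u i) x y hab]
        exact sum_rpow_mul_rpow_le s (hterm x) (hterm y) ha hb hab
    _ = a • log (∑ i ∈ s, w i * exp (u i * x)) + b • log (∑ i ∈ s, w i * exp (u i * y)) := by
        rw [log_mul (rpow_pos_of_pos (hpos x) a).ne' (rpow_pos_of_pos (hpos y) b).ne',
          log_rpow (hpos x), log_rpow (hpos y), smul_eq_mul, smul_eq_mul]

theorem Real.ite_rpow_mul_ite_rpow_one_sub {r t : ℝ} (hr : 0 ≤ r) (ht : 0 ≤ t) (s : ℝ) :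
    (if r = 0 then 0 else r ^ s) * (if t = 0 then 0 else t ^ (1 - s)) =
      (if r = 0 ∨ t = 0 then 0 else t) * exp ((log r - log t) * s) := by
  by_cases hr0 : r = 0
  · simp [hr0]
  by_cases ht0 : t = 0
  · simp [ht0]
  rw [if_neg hr0, if_neg ht0, if_neg (not_or.2 ⟨hr0, ht0⟩),
    rpow_def_of_pos (hr.lt_of_ne' hr0), rpow_def_of_pos (ht.lt_of_ne' ht0), ← exp_add,
    ← exp_log (ht.lt_of_ne' ht0), ← exp_add, log_exp]
  ring_nf

theorem Matrix.trace_diagonal_mul_mul_diagonal_mul_star {n : Type*} [Fintype n] [DecidableEq n]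
    (d e : n → ℂ) (W : Matrix n n ℂ) :
    (diagonal d * W * diagonal e * star W).trace =
      ∑ i, ∑ j, d i * e j * (W i j * star (W i j)) := by
  simp only [trace, diag_apply, mul_apply (M := diagonal d * W * diagonal e), mul_diagonal,
    diagonal_mul, star_apply]
  exact sum_congr rfl fun i _ => sum_congr rfl fun j _ => by ring

theorem Matrix.IsHermitian.re_trace_cfc_mul_cfc {n : Type*} [Fintype n] [DecidableEq n]
    {A B : Matrix n n ℂ} (hA : A.IsHermitian) (hB : B.IsHermitian) (f g : ℝ → ℝ) :
    ((hA.cfc f * hB.cfc g).trace).re =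
      ∑ i, ∑ j, f (hA.eigenvalues i) * g (hB.eigenvalues j) *
        Complex.normSq ((star (hA.eigenvectorUnitary : Matrix n n ℂ) *
          (hB.eigenvectorUnitary : Matrix n n ℂ)) i j) := by
  set U := (hA.eigenvectorUnitary : Matrix n n ℂ)
  set V := (hB.eigenvectorUnitary : Matrix n n ℂ)
  have hconj : (hA.cfc f * hB.cfc g).trace =
      (diagonal (fun i => (f (hA.eigenvalues i) : ℂ)) * (star U * V) *
        diagonal (fun j => (g (hB.eigenvalues j) : ℂ)) * star (star U * V)).trace := by
    rw [IsHermitian.cfc, IsHermitian.cfc, Unitary.conjStarAlgAut_apply,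
      Unitary.conjStarAlgAut_apply]
    simp only [star_mul, star_star, Matrix.mul_assoc]
    rw [trace_mul_comm]
    simp only [Matrix.mul_assoc]
    rfl
  rw [hconj, trace_diagonal_mul_mul_diagonal_mul_star]
  simp only [Complex.star_def, Complex.mul_conj, ← Complex.ofReal_mul, Complex.re_sum,
    Complex.ofReal_re]

theorem stmt7_general {n : Type*} [Fintype n] [DecidableEq n]
    {ρ σ : Matrix n n ℂ} (hρ : ρ.PosSemidef) (hσ : σ.PosSemidef) :
    ConvexOn ℝ (Set.Icc (0:ℝ) 1)
      (fun s => Real.log (((hρ.rpow s * hσ.rpow (1 - s)).trace).re)) := by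
  set r := hρ.1.eigenvalues
  set t := hσ.1.eigenvalues
  set c : n × n → ℝ := fun p => Complex.normSq ((star (hρ.1.eigenvectorUnitary : Matrix n n ℂ) *
    (hσ.1.eigenvectorUnitary : Matrix n n ℂ)) p.1 p.2)
  set w : n × n → ℝ := fun p => c p * if r p.1 = 0 ∨ t p.2 = 0 then 0 else t p.2
  have hw : ∀ p ∈ univ, 0 ≤ w p := fun p _ => mul_nonneg (Complex.normSq_nonneg _)
    (by split_ifs; exacts [le_rfl, hσ.eigenvalues_nonneg p.2])
  have htrace : ∀ s : ℝ, ((hρ.rpow s * hσ.rpow (1 - s)).trace).re =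
      ∑ p ∈ univ, w p * exp ((log (r p.1) - log (t p.2)) * s) := fun s => by
    rw [PosSemidef.rpow, PosSemidef.rpow, IsHermitian.re_trace_cfc_mul_cfc, ← univ_product_univ,
      sum_product]
    refine sum_congr rfl fun i _ => sum_congr rfl fun j _ => ?_
    rw [ite_rpow_mul_ite_rpow_one_sub (hρ.eigenvalues_nonneg i) (hσ.eigenvalues_nonneg j)]
    ring
  simp only [htrace]
  exact (convexOn_log_sum_mul_exp univ _ hw).subset (Set.subset_univ _) (convex_Icc 0 1)

/-- For density matrices `ρ`, `σ`, the map `ψ(s) = log Tr(ρ^s σ^{1-s})` is convex on `[0,1]`. -/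
theorem stmt7 {n : Type*} [Fintype n] [DecidableEq n]
    {ρ σ : Matrix n n ℂ} (hρ : ρ.PosSemidef) (hσ : σ.PosSemidef)
    (hρ1 : ρ.trace = 1) (hσ1 : σ.trace = 1) :
    ConvexOn ℝ (Set.Icc (0:ℝ) 1)
      (fun s => Real.log (((hρ.rpow s * hσ.rpow (1 - s)).trace).re)) :=
  stmt7_general hρ hσ
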